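/- For n ≥ 3, the set difference E_{n+1} \ E_n has cardinality 3n − 6, where E_m = { (l_1, l_2) : there exist integers 1 ≤ a < b < c ≤ m with l_1 = a + b and l_2 = b + c }. -/
import Mathlib


/-- `En n` is the (finite) set of pairs `(l₁, l₂)` such that there exist integers
`1 ≤ a < b < c ≤ n` with `l₁ = a + b` and `l₂ = b + c`. -/
def En (n : ℕ) : Finset (ℕ × ℕ) :=
  (((Finset.Icc 1 n) ×ˢ (Finset.Icc 1 n) ×ˢ (Finset.Icc 1 n)).filter
    (fun p => p.1 < p.2.1 ∧ p.2.1 < p.2.2)).image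
    (fun p => (p.1 + p.2.1, p.2.1 + p.2.2))

lemma mem_En (m : ℕ) (x : ℕ × ℕ) :
    x ∈ En m ↔ ∃ a b c : ℕ, 1 ≤ a ∧ a < b ∧ b < c ∧ c ≤ m ∧ x.1 = a + b ∧ x.2 = b + c := by
  simp only [En, Finset.mem_image, Finset.mem_filter, Finset.mem_product, Finset.mem_Icc]
  constructor
  · rintro ⟨⟨a, b, c⟩, ⟨⟨ha, hb, hc⟩, h1, h2⟩, rfl⟩
    exact ⟨a, b, c, ha.1, h1, h2, hc.2, rfl, rfl⟩
  · rintro ⟨a, b, c, h1, h2, h3, h4, h5, h6⟩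
    refine ⟨⟨a, b, c⟩, ⟨⟨⟨h1, show a ≤ m by omega⟩, ⟨show 1 ≤ b by omega, show b ≤ m by omega⟩,
      ⟨show 1 ≤ c by omega, h4⟩⟩, h2, h3⟩, ?_⟩
    simp [Prod.ext_iff, h5, h6]

/-- The explicit description of `E_{n+1} \ E_n`. -/
def Sn (n : ℕ) : Finset (ℕ × ℕ) :=
  ((Finset.Icc 3 (n - 1)).image (fun i => (i, i + n))) ∪
  ((Finset.Icc n (2 * n - 3)).image (fun i => (i, 2 * n))) ∪
  ((Finset.Icc (n + 1) (2 * n - 1)).image (fun i => (i, 2 * n + 1)))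

lemma mem_Sn (n : ℕ) (x : ℕ × ℕ) :
    x ∈ Sn n ↔ (3 ≤ x.1 ∧ x.1 ≤ n - 1 ∧ x.2 = x.1 + n) ∨
      (n ≤ x.1 ∧ x.1 ≤ 2 * n - 3 ∧ x.2 = 2 * n) ∨
      (n + 1 ≤ x.1 ∧ x.1 ≤ 2 * n - 1 ∧ x.2 = 2 * n + 1) := by
  obtain ⟨x1, x2⟩ := x
  simp only [Sn, Finset.mem_union, Finset.mem_image, Finset.mem_Icc, Prod.mk.injEq]
  constructor
  · rintro ((⟨i, hi, rfl, rfl⟩ | ⟨i, hi, rfl, rfl⟩) | ⟨i, hi, rfl, rfl⟩) <;> omega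
  · rintro (⟨h1, h2, rfl⟩ | ⟨h1, h2, rfl⟩ | ⟨h1, h2, rfl⟩)
    · exact Or.inl (Or.inl ⟨x1, ⟨h1, h2⟩, rfl, rfl⟩)
    · exact Or.inl (Or.inr ⟨x1, ⟨h1, h2⟩, rfl, rfl⟩)
    · exact Or.inr ⟨x1, ⟨h1, h2⟩, rfl, rfl⟩

lemma sdiff_eq_Sn (n : ℕ) (hn : 3 ≤ n) : (En (n + 1)) \ (En n) = Sn n := by
  ext x
  rw [Finset.mem_sdiff, mem_En, mem_En, mem_Sn]
  constructor
  · rintro ⟨⟨a, b, c, h1, h2, h3, h4, h5, h6⟩, hnot⟩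
    push_neg at hnot
    have hc : c = n + 1 := by
      by_contra h
      exact absurd h6 (hnot a b c h1 h2 h3 (by omega) h5)
    by_cases hb : n - 1 ≤ b
    · rcases (show b = n - 1 ∨ b = n by omega) with hb' | hb'
      · exact Or.inr (Or.inl ⟨by omega, by omega, by omega⟩)
      · exact Or.inr (Or.inr ⟨by omega, by omega, by omega⟩)
    · have key := hnot (a - 1) (b + 1) (c - 1)
      by_cases ha : a = 1
      · subst ha
        exact Or.inl ⟨by omega, by omega, by omega⟩
      · exfalso
        have := key (by omega) (by omega) (by omega) (by omega) (by omega)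
        omega
  · rintro (⟨h1, h2, h3⟩ | ⟨h1, h2, h3⟩ | ⟨h1, h2, h3⟩)
    · refine ⟨⟨1, x.1 - 1, n + 1, by omega, by omega, by omega, le_refl _, by omega, by omega⟩, ?_⟩
      rintro ⟨a, b, c, g1, g2, g3, g4, g5, g6⟩
      omega
    · refine ⟨⟨x.1 - n + 1, n - 1, n + 1, by omega, by omega, by omega, le_refl _, by omega, by omega⟩, ?_⟩
      rintro ⟨a, b, c, g1, g2, g3, g4, g5, g6⟩
      omega
    · refine ⟨⟨x.1 - n, n, n + 1, by omega, by omega, by omega, le_refl _, by omega, by omega⟩, ?_⟩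
      rintro ⟨a, b, c, g1, g2, g3, g4, g5, g6⟩
      omega

lemma card_Sn (n : ℕ) (hn : 3 ≤ n) : (Sn n).card = 3 * n - 6 := by
  have d1 : Disjoint ((Finset.Icc 3 (n - 1)).image (fun i => (i, i + n)))
      ((Finset.Icc n (2 * n - 3)).image (fun i => (i, 2 * n))) := by
    simp only [Finset.disjoint_left, Finset.mem_image, Finset.mem_Icc]
    rintro x ⟨i, hi, rfl⟩ ⟨j, hj, hh⟩
    simp only [Prod.mk.injEq] at hh
    omega
  have d2 : Disjoint (((Finset.Icc 3 (n - 1)).image (fun i => (i, i + n))) ∪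
      ((Finset.Icc n (2 * n - 3)).image (fun i => (i, 2 * n))))
      ((Finset.Icc (n + 1) (2 * n - 1)).image (fun i => (i, 2 * n + 1))) := by
    simp only [Finset.disjoint_left, Finset.mem_union, Finset.mem_image, Finset.mem_Icc]
    rintro x (⟨i, hi, rfl⟩ | ⟨i, hi, rfl⟩) ⟨j, hj, hh⟩ <;>
      simp only [Prod.mk.injEq] at hh <;> omega
  rw [Sn, Finset.card_union_of_disjoint d2, Finset.card_union_of_disjoint d1,
    Finset.card_image_of_injective _ (fun a b h => by simpa [Prod.ext_iff] using h),
    Finset.card_image_of_injective _ (fun a b h => by simpa [Prod.ext_iff] using h),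
    Finset.card_image_of_injective _ (fun a b h => by simpa [Prod.ext_iff] using h),
    Nat.card_Icc, Nat.card_Icc, Nat.card_Icc]
  omega

/-- For `n ≥ 3` the set difference `E_{n+1} \ E_n` has exactly `3n - 6` elements. -/
theorem card_En_succ_sdiff (n : ℕ) (hn : 3 ≤ n) :
    ((En (n + 1)) \ (En n)).card = 3 * n - 6 := by
  rw [sdiff_eq_Sn n hn, card_Sn n hn]
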